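/- Consider a 2-action score-symmetric competitiveness-based ranking game with d ≥ 2 players, actions a_1 (cost 0 for every player) and a_2 (cost c^i_2 > 0 for player i, with a_2 having strictly higher score), prizes u_1 ≥ … ≥ u_d with u_1 > u_d, and tie-sharing payoffs: in a pure profile with exactly k players playing a_2 (1 ≤ k ≤ d−1) each a_2-player gets (u_1+…+u_k)/k − c^i_2 and each a_1-player gets (u_{k+1}+…+u_d)/(d−k), while if k = 0 or k = d every player gets (u_1+…+u_d)/d minus his chosen action's cost. Suppose the players are indexed so that c^1_2 ≤ c^2_2 ≤ … ≤ c^d_2. For 1 ≤ i ≤ d, say condition I(i) holds if (u_1+…+u_i)/i − c^i_2 > (u_i+…+u_d)/(d−i+1). Let k be the largest integer in {0,…,d} such that I(i) holds for all 1 ≤ i ≤ k (k = 0 if I(1) fails). Then the pure profile Z_k, in which players 1,…,k play a_2 and players k+1,…,d play a_1, is a pure Nash equilibrium. -/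
import Mathlib


open Finset
open scoped Classical

/-- Payoff in the 2-action score-symmetric ranking game: `t i = true` means
player `i` plays the stronger action `a₂` (with player-specific cost `c i`),
`t i = false` means he plays the weaker action `a₁` (cost 0).  If `k` players
play `a₂`, each of them gets `(u₁ + … + u_k)/k` minus his cost and each
`a₁`-player gets `(u_{k+1} + … + u_d)/(d-k)`; this formula also covers the
cases `k = 0` and `k = d`, where everyone gets `(u₁ + … + u_d)/d` minus the
cost of his chosen action. -/
noncomputable def payTwo (d : ℕ) (u : Fin d → ℝ) (c : Fin d → ℝ)
    (t : Fin d → Bool) (i : Fin d) : ℝ :=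
  if t i then
    (∑ l : Fin d, if (l : ℕ) < (Finset.univ.filter fun p => t p = true).card then u l else 0) /
      (((Finset.univ.filter fun p => t p = true).card : ℕ) : ℝ) - c i
  else
    (∑ l : Fin d, if (Finset.univ.filter fun p => t p = true).card ≤ (l : ℕ) then u l else 0) /
      ((d : ℝ) - (((Finset.univ.filter fun p => t p = true).card : ℕ) : ℝ))

/-- Condition I(i) (players 0-indexed; I(i) here is I(i+1) of the 1-indexed
statement): playing `a₂` alongside the cheaper players `0,…,i-1` strictly
beats switching to `a₁`:
`(u₁+…+u_{i+1})/(i+1) - c i > (u_{i+1}+…+u_d)/(d-i)`. -/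
def Icond (d : ℕ) (u : Fin d → ℝ) (c : Fin d → ℝ) (i : Fin d) : Prop :=
  (∑ l : Fin d, if (l : ℕ) ≤ (i : ℕ) then u l else 0) / (((i : ℕ) : ℝ) + 1) - c i >
    (∑ l : Fin d, if (i : ℕ) ≤ (l : ℕ) then u l else 0) / ((d : ℝ) - ((i : ℕ) : ℝ))

/-- if the players are indexed in non-decreasing order of their
cost of `a₂` and `k` is the largest integer such that I(i) holds for all the
first `k` players, then the profile in which exactly the first `k` players
play `a₂` is a pure Nash equilibrium. -/
theorem greedy_profile_is_pure_NE (d : ℕ) (hd : 2 ≤ d)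
    (u : Fin d → ℝ) (hu : Antitone u) (hud : u ⟨d - 1, by omega⟩ < u ⟨0, by omega⟩)
    (c : Fin d → ℝ) (hc : ∀ i, 0 < c i) (hmono : Monotone c)
    (k : ℕ) (hk : k ≤ d)
    (hall : ∀ i : Fin d, (i : ℕ) < k → Icond d u c i)
    (hmax : ∀ h : k < d, ¬ Icond d u c ⟨k, h⟩) :
    ∀ (i : Fin d) (b : Bool),
      payTwo d u c (Function.update (fun p : Fin d => decide ((p : ℕ) < k)) i b) i ≤
        payTwo d u c (fun p : Fin d => decide ((p : ℕ) < k)) i := by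
  intro i b
  set t : Fin d → Bool := fun p : Fin d => decide ((p : ℕ) < k) with ht
  have hcard : (Finset.univ.filter fun p : Fin d => t p = true).card = k := by
    have h : (Finset.univ.filter fun p : Fin d => t p = true)
        = (Finset.range k).attachFin
            (fun x hx => lt_of_lt_of_le (Finset.mem_range.1 hx) hk) := by
      ext p
      simp [ht, Finset.mem_attachFin]
    rw [h, Finset.card_attachFin, Finset.card_range]
  by_cases hbi : b = t i
  · rw [hbi, Function.update_eq_self]
  by_cases hik : (i : ℕ) < k
  · -- player i plays a₂ in the profile; the deviation is to a₁
    have hti : t i = true := by simp [ht, hik]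
    have hbf : b = false := by
      cases b
      · rfl
      · rw [hti] at hbi; exact absurd rfl hbi
    subst hbf
    have hk1 : 1 ≤ k := by omega
    have hmem : i ∈ Finset.univ.filter fun p : Fin d => t p = true := by
      simp [hti]
    have hfil : (Finset.univ.filter fun p : Fin d => (Function.update t i false) p = true)
        = (Finset.univ.filter fun p : Fin d => t p = true).erase i := by
      ext p
      by_cases hpi : p = i <;> simp [hpi, Function.update_apply, hti]
    have hcard' :
        (Finset.univ.filter fun p : Fin d => (Function.update t i false) p = true).card
          = k - 1 := by
      rw [hfil, Finset.card_erase_of_mem hmem, hcard]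
    simp only [payTwo, Function.update_self, hcard', hcard, hti, if_true, if_false,
      Bool.false_eq_true]
    set j : Fin d := ⟨k - 1, by omega⟩ with hj
    have hI := hall j (by simp only [hj]; omega)
    simp only [Icond, hj, gt_iff_lt] at hI
    have hsum : (∑ l : Fin d, if (l : ℕ) ≤ k - 1 then u l else 0)
        = ∑ l : Fin d, if (l : ℕ) < k then u l else 0 := by
      refine Finset.sum_congr rfl fun l _ => ?_
      simp only [show ((l : ℕ) ≤ k - 1) = ((l : ℕ) < k) from propext (by omega)]
    have hden : ((k - 1 : ℕ) : ℝ) + 1 = (k : ℝ) := by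
      rw [Nat.cast_sub hk1, Nat.cast_one]; ring
    rw [hsum, hden] at hI
    have hcij : c i ≤ c j := by
      refine hmono ?_
      rw [Fin.le_def]
      simp only [hj]
      omega
    linarith
  · -- player i plays a₁ in the profile; the deviation is to a₂
    have hki : k ≤ (i : ℕ) := le_of_not_gt hik
    have hkd : k < d := lt_of_le_of_lt hki i.isLt
    have hti : t i = false := by simp [ht]; omega
    have hbt : b = true := by
      cases b
      · rw [hti] at hbi; exact absurd rfl hbi
      · rfl
    subst hbt
    have hmem : i ∉ Finset.univ.filter fun p : Fin d => t p = true := by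
      simp [hti]
    have hfil : (Finset.univ.filter fun p : Fin d => (Function.update t i true) p = true)
        = insert i (Finset.univ.filter fun p : Fin d => t p = true) := by
      ext p
      by_cases hpi : p = i <;> simp [hpi, Function.update_apply]
    have hcard' :
        (Finset.univ.filter fun p : Fin d => (Function.update t i true) p = true).card
          = k + 1 := by
      rw [hfil, Finset.card_insert_of_notMem hmem, hcard]
    simp only [payTwo, Function.update_self, hcard', hcard, hti, if_true, if_false,
      Bool.false_eq_true]
    have hI := hmax hkd
    simp only [Icond, gt_iff_lt, not_lt] at hI
    have hsum : (∑ l : Fin d, if (l : ℕ) ≤ k then u l else 0)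
        = ∑ l : Fin d, if (l : ℕ) < k + 1 then u l else 0 := by
      refine Finset.sum_congr rfl fun l _ => ?_
      simp only [show ((l : ℕ) ≤ k) = ((l : ℕ) < k + 1) from propext (by omega)]
    have hden : ((k : ℕ) : ℝ) + 1 = ((k + 1 : ℕ) : ℝ) := by push_cast; ring
    rw [hsum, hden] at hI
    have hcij : c ⟨k, hkd⟩ ≤ c i := by
      refine hmono ?_
      rw [Fin.le_def]
      exact hki
    linarith
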